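/- arXiv:2201.09838 — 3 statements merged into one kernel-verified Lean document; each statement's English description precedes it below -/
import Mathlib

section
/- Let Q be the cyclic quiver of length ℓ ≥ 1 (affine type A) and let u ∈ ℕ^{Q₀}. Then there exist nonempty connected subsets I₁, …, I_m ⊆ Q₀ such that u = Σ_{α=1}^m e_{I_α} and e_{I_α}·C_Q·e_{I_β} ≥ 0 for every pair 1 ≤ α, β ≤ m. -/
/-!
Peel off the indicator of a connected component `A` of the support of `u` and decompose the
remainder by induction on `∑ u`. Every connected piece of the remainder lies in the support of
`u`, so by maximality of `A` it is either contained in `A` or disjoint from `A` with no edge to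
it. The Cartan matrix has nonpositive off-diagonal entries and zero row sums, hence
`e_A·C_Q·e_B ≥ 0` when `A ⊆ B` (and, by symmetry, when `B ⊆ A`), while `e_A·C_Q·e_B = 0` when
`A` and `B` are disjoint and non-adjacent.
-/

open Matrix

noncomputable section

/-- The underlying graph of the cyclic quiver of length `ℓ` (vertex set `ℤ/ℓ`, one arrow
`i → i+1` for each `i`), as a simple graph (loops and edge multiplicities do not matter
for connectivity). -/
def cyclicGraph (ℓ : ℕ) : SimpleGraph (ZMod ℓ) where
  Adj i j := i ≠ j ∧ (j = i + 1 ∨ i = j + 1)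
  symm := by
    refine ⟨fun i j h => ?_⟩
    exact ⟨h.1.symm, h.2.symm⟩
  loopless := ⟨fun i h => h.1 rfl⟩

/-- A nonempty subset `I` of the vertices of the cyclic quiver is connected if the full
subgraph induced on `I` is connected. -/
def CyclicConnected (ℓ : ℕ) (I : Finset (ZMod ℓ)) : Prop :=
  ((cyclicGraph ℓ).induce (I : Set (ZMod ℓ))).Connected

/-- The Cartan matrix `C_Q = 2·Id - A - Aᵀ` of the cyclic quiver of length `ℓ`. -/
def cyclicCartan (ℓ : ℕ) : Matrix (ZMod ℓ) (ZMod ℓ) ℤ := fun i j =>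
  2 * (if i = j then 1 else 0) - (if j = i + 1 then 1 else 0) - (if i = j + 1 then 1 else 0)

/-- The indicator vector `e_I = ∑_{i ∈ I} e_i` of a subset of vertices. -/
def eInd (ℓ : ℕ) (I : Finset (ZMod ℓ)) : ZMod ℓ → ℤ := fun i => if i ∈ I then 1 else 0

namespace SimpleGraph

variable {V : Type*} (G : SimpleGraph V)

def NestedOrSeparated (A B : Finset V) : Prop :=
  A ⊆ B ∨ B ⊆ A ∨ ∀ i ∈ A, ∀ j ∈ B, i ≠ j ∧ ¬G.Adj i j

variable {G}

lemma NestedOrSeparated.refl (A : Finset V) : G.NestedOrSeparated A A :=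
  Or.inl subset_rfl

lemma NestedOrSeparated.symm {A B : Finset V} (h : G.NestedOrSeparated A B) :
    G.NestedOrSeparated B A := by
  rcases h with hAB | hBA | hsep
  · exact Or.inr (Or.inl hAB)
  · exact Or.inl hBA
  · exact Or.inr (Or.inr fun j hj i hi =>
      ⟨(hsep i hi j hj).1.symm, fun hji => (hsep i hi j hj).2 hji.symm⟩)

lemma exists_maximal_connected_mem [Finite V] {S : Finset V} {x : V} (hx : x ∈ S) :
    ∃ A, x ∈ A ∧ Maximal (fun T : Finset V => T ⊆ S ∧ (G.induce (T : Set V)).Connected) A := by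
  have hsingleton : ({x} : Finset V) ⊆ S ∧ (G.induce (({x} : Finset V) : Set V)).Connected :=
    ⟨Finset.singleton_subset_iff.mpr hx, by rw [Finset.coe_singleton]; simp⟩
  obtain ⟨A, hxA, hA⟩ := Finite.exists_le_maximal
    (p := fun T : Finset V => T ⊆ S ∧ (G.induce (T : Set V)).Connected) hsingleton
  exact ⟨A, Finset.singleton_subset_iff.mp hxA, hA⟩

section MaximalConnected

variable [DecidableEq V] {S A : Finset V}

lemma subset_of_maximal_connected
    (hA : Maximal (fun T : Finset V => T ⊆ S ∧ (G.induce (T : Set V)).Connected) A)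
    {I : Finset V} (hIS : I ⊆ S) (hI : (G.induce (I : Set V)).Connected)
    (hAI : ¬Disjoint A I) : I ⊆ A := by
  have hunion : (G.induce ((A ∪ I : Finset V) : Set V)).Connected := by
    rw [Finset.coe_union]
    refine induce_union_connected hA.prop.2.preconnected hI.preconnected ?_
    rwa [← Set.not_disjoint_iff_nonempty_inter, Finset.disjoint_coe]
  exact Finset.union_subset_right (hA.le_of_ge ⟨Finset.union_subset hA.prop.1 hIS, hunion⟩
    Finset.subset_union_left)

lemma mem_of_maximal_connected
    (hA : Maximal (fun T : Finset V => T ⊆ S ∧ (G.induce (T : Set V)).Connected) A)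
    {i j : V} (hi : i ∈ A) (hj : j ∈ S) (hij : G.Adj i j) : j ∈ A := by
  have hpair : (G.induce ((({i, j} : Finset V)) : Set V)).Connected := by
    rw [Finset.coe_pair]
    exact induce_pair_connected_of_adj hij
  refine subset_of_maximal_connected hA (Finset.insert_subset (hA.prop.1 hi)
    (Finset.singleton_subset_iff.mpr hj)) hpair ?_ (by simp)
  exact Finset.not_disjoint_iff.mpr ⟨i, hi, by simp⟩

lemma nestedOrSeparated_of_maximal_connected
    (hA : Maximal (fun T : Finset V => T ⊆ S ∧ (G.induce (T : Set V)).Connected) A)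
    {I : Finset V} (hIS : I ⊆ S) (hI : (G.induce (I : Set V)).Connected) :
    G.NestedOrSeparated A I := by
  by_cases hAI : Disjoint A I
  · refine Or.inr (Or.inr fun i hi j hj => ⟨?_, fun hij => ?_⟩)
    · rintro rfl
      exact Finset.disjoint_left.mp hAI hi hj
    · exact Finset.disjoint_left.mp hAI (mem_of_maximal_connected hA hi (hIS hj) hij) hj
  · exact Or.inr (Or.inl (subset_of_maximal_connected hA hIS hI hAI))

end MaximalConnected

theorem exists_connected_nestedOrSeparated_decomposition [Fintype V] [DecidableEq V]
    (u : V → ℕ) :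
    ∃ (m : ℕ) (Is : Fin m → Finset V),
      (∀ α, (G.induce (Is α : Set V)).Connected) ∧
      (∀ i, u i = ∑ α, if i ∈ Is α then 1 else 0) ∧
      (∀ α β, G.NestedOrSeparated (Is α) (Is β)) := by
  induction hN : ∑ i, u i using Nat.strong_induction_on generalizing u with
  | _ N IH =>
  by_cases hu : ∀ i, u i = 0
  · exact ⟨0, Fin.elim0, (·.elim0), fun i => by simp [hu i], (·.elim0)⟩
  push Not at hu
  obtain ⟨x, hx⟩ := hu
  set S := Finset.univ.filter (fun i => u i ≠ 0)
  obtain ⟨A, hxA, hA⟩ := exists_maximal_connected_mem (G := G) (S := S) (by simpa [S] using hx)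
  have hAu : ∀ i ∈ A, u i ≠ 0 := fun i hi => (Finset.mem_filter.mp (hA.prop.1 hi)).2
  set u' : V → ℕ := fun i => u i - if i ∈ A then 1 else 0
  have hu' : ∀ i, u i = (if i ∈ A then 1 else 0) + u' i := by
    intro i
    by_cases hi : i ∈ A
    · have := hAu i hi
      simp only [u', hi, if_true]
      omega
    · simp [u', hi]
  have hlt : ∑ i, u' i < N := by
    rw [← hN]
    refine Finset.sum_lt_sum (fun i _ => by rw [hu' i]; omega) ⟨x, Finset.mem_univ _, ?_⟩
    rw [hu' x]
    simp [hxA]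
  obtain ⟨m, Is, hconn, hcount, hnest⟩ := IH _ hlt u' rfl
  have hIsS : ∀ β, Is β ⊆ S := by
    intro β i hi
    have : u' i ≠ 0 := by
      rw [hcount i]
      exact (Finset.sum_pos' (fun _ _ => by positivity) ⟨β, Finset.mem_univ _, by simp [hi]⟩).ne'
    simp only [S, Finset.mem_filter, Finset.mem_univ, true_and]
    have := hu' i
    omega
  have hAIs : ∀ β, G.NestedOrSeparated A (Is β) := fun β =>
    nestedOrSeparated_of_maximal_connected hA (hIsS β) (hconn β)
  refine ⟨m + 1, Fin.cons A Is, ?_, fun i => ?_, ?_⟩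
  · simpa [Fin.forall_fin_succ] using ⟨hA.prop.2, hconn⟩
  · rw [Fin.sum_univ_succ, hu' i, hcount i]
    simp only [Fin.cons_zero, Fin.cons_succ]
  · simp only [Fin.forall_fin_succ, Fin.cons_zero, Fin.cons_succ]
    exact ⟨⟨.refl A, hAIs⟩, fun β => ⟨(hAIs β).symm, hnest β⟩⟩

end SimpleGraph

namespace Matrix

variable {n R : Type*} [Fintype n] [AddCommGroup R] [PartialOrder R] [IsOrderedAddMonoid R]

lemma sum_sum_nonneg_of_subset {M : Matrix n n R} (hoff : ∀ i j, i ≠ j → M i j ≤ 0)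
    (hrow : ∀ i, ∑ j, M i j = 0) {A B : Finset n} (hAB : A ⊆ B) :
    0 ≤ ∑ i ∈ A, ∑ j ∈ B, M i j := by
  classical
  refine Finset.sum_nonneg fun i hi => ?_
  have hcompl : ∑ j ∈ Bᶜ, M i j ≤ 0 :=
    Finset.sum_nonpos fun j hj => hoff i j fun hij => Finset.mem_compl.mp hj (hij ▸ hAB hi)
  have hsplit := Finset.sum_compl_add_sum B (M i)
  rw [hrow i] at hsplit
  rw [eq_neg_of_add_eq_zero_right hsplit]
  exact neg_nonneg.mpr hcompl

end Matrix

section Cartan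

variable {ℓ : ℕ}

lemma cyclicCartan_comm (i j : ZMod ℓ) : cyclicCartan ℓ i j = cyclicCartan ℓ j i := by
  simp only [cyclicCartan, eq_comm (a := i)]
  ring

lemma cyclicCartan_nonpos_of_ne {i j : ZMod ℓ} (hij : i ≠ j) : cyclicCartan ℓ i j ≤ 0 := by
  simp only [cyclicCartan, hij, if_false]
  split_ifs <;> norm_num

lemma cyclicCartan_eq_zero_of_not_adj {i j : ZMod ℓ} (hij : i ≠ j)
    (hadj : ¬(cyclicGraph ℓ).Adj i j) : cyclicCartan ℓ i j = 0 := by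
  simp only [cyclicGraph, not_and, not_or] at hadj
  obtain ⟨h₁, h₂⟩ := hadj hij
  simp [cyclicCartan, hij, h₁, h₂]

lemma sum_cyclicCartan [NeZero ℓ] (i : ZMod ℓ) : ∑ j, cyclicCartan ℓ i j = 0 := by
  have hpred : ∀ j : ZMod ℓ, i = j + 1 ↔ j = i - 1 := fun j => by rw [eq_sub_iff_add_eq, eq_comm]
  simp [cyclicCartan, Finset.sum_sub_distrib, hpred]

lemma eInd_dotProduct_mulVec [NeZero ℓ] (M : Matrix (ZMod ℓ) (ZMod ℓ) ℤ)
    (A B : Finset (ZMod ℓ)) : eInd ℓ A ⬝ᵥ M *ᵥ eInd ℓ B = ∑ i ∈ A, ∑ j ∈ B, M i j := by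
  simp [dotProduct, mulVec, eInd, Finset.sum_ite_mem]

lemma cyclicCartan_pairing_nonneg [NeZero ℓ] {A B : Finset (ZMod ℓ)}
    (h : (cyclicGraph ℓ).NestedOrSeparated A B) :
    0 ≤ eInd ℓ A ⬝ᵥ cyclicCartan ℓ *ᵥ eInd ℓ B := by
  have hoff : ∀ i j : ZMod ℓ, i ≠ j → cyclicCartan ℓ i j ≤ 0 := fun _ _ => cyclicCartan_nonpos_of_ne
  rw [eInd_dotProduct_mulVec]
  rcases h with hAB | hBA | hsep
  · exact Matrix.sum_sum_nonneg_of_subset hoff sum_cyclicCartan hAB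
  · calc 0 ≤ ∑ j ∈ B, ∑ i ∈ A, cyclicCartan ℓ j i :=
          Matrix.sum_sum_nonneg_of_subset hoff sum_cyclicCartan hBA
      _ = ∑ i ∈ A, ∑ j ∈ B, cyclicCartan ℓ i j := Finset.sum_comm.trans
          (Finset.sum_congr rfl fun i _ => Finset.sum_congr rfl fun j _ => cyclicCartan_comm j i)
  · exact (Finset.sum_eq_zero fun i hi => Finset.sum_eq_zero fun j hj =>
      cyclicCartan_eq_zero_of_not_adj (hsep i hi j hj).1 (hsep i hi j hj).2).ge

end Cartan

/-- Every `u ∈ ℕ^{Q₀}` over the cyclic quiver of length `ℓ ≥ 1` can be written as a sum of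
indicator vectors `e_{I_α}` of nonempty connected subsets with `e_{I_α}·C_Q·e_{I_β} ≥ 0`
for all pairs `α`, `β`. -/
theorem cyclic_decomposition_into_connected_indicators
    (ℓ : ℕ) [NeZero ℓ] (u : ZMod ℓ → ℕ) :
    ∃ (m : ℕ) (Is : Fin m → Finset (ZMod ℓ)),
      (∀ α, (Is α).Nonempty ∧ CyclicConnected ℓ (Is α)) ∧
      (∀ i, (u i : ℤ) = ∑ α, eInd ℓ (Is α) i) ∧
      (∀ α β, 0 ≤ eInd ℓ (Is α) ⬝ᵥ (cyclicCartan ℓ).mulVec (eInd ℓ (Is β))) := by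
  obtain ⟨m, Is, hconn, hcount, hnest⟩ :=
    (cyclicGraph ℓ).exists_connected_nestedOrSeparated_decomposition u
  refine ⟨m, Is, fun α => ⟨?_, hconn α⟩, fun i => ?_,
    fun α β => cyclicCartan_pairing_nonneg (hnest α β)⟩
  · exact Finset.coe_nonempty.mp (Set.nonempty_coe_sort.mp (hconn α).nonempty)
  · rw [hcount i]
    push_cast
    rfl

end
end

section
/- Let Q be a finite quiver and v ∈ ℕ^{Q₀} a nonzero dimension vector. If the moment map μ of (Q,v) is flat, then the support {i ∈ Q₀ : v_i > 0} induces a connected full subgraph of the underlying graph of Q. -/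
set_option linter.unusedSectionVars false

open MvPolynomial Matrix

noncomputable section

namespace QuiverScheme

/-- Cast a square matrix along an equality of sizes. -/
def castSq {R : Type*} {n m : ℕ} (e : n = m) (M : Matrix (Fin n) (Fin n) R) :
    Matrix (Fin m) (Fin m) R :=
  M.submatrix (finCongr e.symm) (finCongr e.symm)

variable {Q0 : Type} [Fintype Q0] [DecidableEq Q0]
variable {Q1 : Type} [Fintype Q1] (tl hd : Q1 → Q0)
variable (v : Q0 → ℕ)

/-- Index of coordinates on `T^*R(Q,v)`: for each arrow `a`, entries of `x_a` and of `y_a`. -/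
abbrev RepIdx : Type :=
  Σ a : Q1, (Fin (v (hd a)) × Fin (v (tl a))) ⊕ (Fin (v (tl a)) × Fin (v (hd a)))

/-- The coordinate ring of `T^*R(Q,v)`. -/
abbrev RepRing : Type := MvPolynomial (RepIdx tl hd v) ℂ

/-- The generic matrix `x_a`. -/
def Xm (a : Q1) : Matrix (Fin (v (hd a))) (Fin (v (tl a))) (RepRing tl hd v) :=
  Matrix.of fun j k => MvPolynomial.X ⟨a, Sum.inl (j, k)⟩

/-- The generic matrix `y_a`. -/
def Ym (a : Q1) : Matrix (Fin (v (tl a))) (Fin (v (hd a))) (RepRing tl hd v) :=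
  Matrix.of fun j k => MvPolynomial.X ⟨a, Sum.inr (j, k)⟩

/-- The `i`-th component of the moment map, as a matrix of polynomials:
`μ(x,y)_i = ∑_{a : h(a)=i} x_a y_a - ∑_{a : t(a)=i} y_a x_a`. -/
def muMat (i : Q0) : Matrix (Fin (v i)) (Fin (v i)) (RepRing tl hd v) :=
  (∑ a : Q1, if h : hd a = i then castSq (congrArg v h) (Xm tl hd v a * Ym tl hd v a)
    else 0)
  - ∑ a : Q1, if h : tl a = i then castSq (congrArg v h) (Ym tl hd v a * Xm tl hd v a)
    else 0

/-- Index of coordinates on `⊕_i gl(v_i)`. -/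
abbrev GlIdx : Type := Σ i : Q0, Fin (v i) × Fin (v i)

/-- The coordinate ring of `⊕_i gl(v_i)`. -/
abbrev GlRing : Type := MvPolynomial (GlIdx v) ℂ

/-- The sum-of-traces linear form, as a polynomial on `⊕_i gl(v_i)`. -/
def tracePoly : GlRing v := ∑ i : Q0, ∑ k : Fin (v i), MvPolynomial.X ⟨i, (k, k)⟩

/-- The coordinate ring of `g(v)^* = {ξ : ∑_i tr ξ_i = 0}`. -/
abbrev GRing : Type := GlRing v ⧸ Ideal.span {tracePoly v}

/-- The comoment map on the coordinate ring of `⊕_i gl(v_i)`. -/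
def comomentAux : GlRing v →ₐ[ℂ] RepRing tl hd v :=
  MvPolynomial.aeval fun p : GlIdx v => muMat tl hd v p.1 p.2.1 p.2.2

lemma trace_castSq {R : Type*} [AddCommMonoid R] {n m : ℕ} (e : n = m)
    (M : Matrix (Fin n) (Fin n) R) : (castSq e M).trace = M.trace := by
  subst e
  rfl

lemma comomentAux_tracePoly : comomentAux tl hd v (tracePoly v) = 0 := by
  classical
  have h1 : comomentAux tl hd v (tracePoly v)
      = ∑ i : Q0, (muMat tl hd v i).trace := by
    simp only [tracePoly, map_sum, comomentAux, MvPolynomial.aeval_X]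
    rfl
  rw [h1]
  have h2 : ∀ i : Q0, (muMat tl hd v i).trace
      = (∑ a : Q1, if h : hd a = i then (Xm tl hd v a * Ym tl hd v a).trace else 0)
        - ∑ a : Q1, if h : tl a = i then (Ym tl hd v a * Xm tl hd v a).trace else 0 := by
    intro i
    rw [muMat, Matrix.trace_sub, Matrix.trace_sum, Matrix.trace_sum]
    congr 1 <;>
    · refine Finset.sum_congr rfl fun a _ => ?_
      split
      · rw [trace_castSq]
      · simp
  rw [Finset.sum_congr rfl fun i _ => h2 i]
  rw [Finset.sum_sub_distrib]
  rw [Finset.sum_comm, Finset.sum_comm (s := (Finset.univ : Finset Q0))]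
  have h3 : ∀ a : Q1,
      (∑ i : Q0, if h : hd a = i then (Xm tl hd v a * Ym tl hd v a).trace else 0)
      = (Xm tl hd v a * Ym tl hd v a).trace := by
    intro a
    rw [Finset.sum_dite_eq]
    simp
  have h4 : ∀ a : Q1,
      (∑ i : Q0, if h : tl a = i then (Ym tl hd v a * Xm tl hd v a).trace else 0)
      = (Ym tl hd v a * Xm tl hd v a).trace := by
    intro a
    rw [Finset.sum_dite_eq]
    simp
  rw [Finset.sum_congr rfl fun a _ => h3 a, Finset.sum_congr rfl fun a _ => h4 a]
  rw [sub_eq_zero]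
  exact Finset.sum_congr rfl fun a _ => Matrix.trace_mul_comm _ _

/-- The comoment map `ℂ[g(v)^*] → ℂ[T^*R(Q,v)]`. -/
def comoment : GRing v →+* RepRing tl hd v :=
  Ideal.Quotient.lift (Ideal.span {tracePoly v})
    (comomentAux tl hd v).toRingHom
    (by
      intro a ha
      rw [Ideal.mem_span_singleton'] at ha
      obtain ⟨c, rfl⟩ := ha
      simp only [AlgHom.toRingHom_eq_coe, RingHom.coe_coe, _root_.map_mul]
      rw [comomentAux_tracePoly]
      simp)

/-- The moment map `μ : T^*R(Q,v) → g(v)^*` is flat, i.e. `ℂ[T^*R(Q,v)]` is a flat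
`ℂ[g(v)^*]`-module via the comoment map. -/
def MomentFlat : Prop :=
  letI : Algebra (GRing v) (RepRing tl hd v) := (comoment tl hd v).toAlgebra
  Module.Flat (GRing v) (RepRing tl hd v)

/-- The underlying graph of the quiver `Q`: vertices `Q₀`, with an edge between `i` and `j`
for each arrow between them (loops are irrelevant for connectivity). -/
def underlyingGraph : SimpleGraph Q0 where
  Adj i j := i ≠ j ∧ ∃ a : Q1, (tl a = i ∧ hd a = j) ∨ (tl a = j ∧ hd a = i)
  symm := ⟨by
    rintro i j ⟨hne, a, h⟩
    exact ⟨hne.symm, a, h.symm⟩⟩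
  loopless := ⟨fun i h => h.1 rfl⟩

/-!
Suppose the support splits into two nonempty parts with no edge between them, and let `S` be
one of them. The partial trace `t_S = ∑_{i ∈ S} tr ξ_i` is not a multiple of the full trace
`∑_i tr ξ_i`, so it is a nonzero element of `ℂ[g(v)^*]`. Its image under the comoment map is
`∑_a ([h(a) ∈ S] - [t(a) ∈ S]) tr(x_a y_a)`, and every arrow with exactly one end in `S` has
an end of dimension `0`, so this image vanishes. But `ℂ[g(v)^*]` is a polynomial ring modulo a
nonzero linear form, hence a domain, and a flat algebra over a domain is torsion-free, so the
comoment map is injective.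
-/

theorem _root_.SimpleGraph.exists_adj_closed_of_not_preconnected_induce {V : Type*}
    {G : SimpleGraph V} {s : Set V} (h : ¬ (G.induce s).Preconnected) :
    ∃ S : Set V, ∃ u ∈ s, ∃ w ∈ s, u ∈ S ∧ w ∉ S ∧
      ∀ i ∈ s, ∀ j ∈ s, G.Adj i j → (i ∈ S ↔ j ∈ S) := by
  obtain ⟨u, w, huw⟩ : ∃ u w : s, ¬ (G.induce s).Reachable u w := by
    simpa [SimpleGraph.Preconnected] using h
  refine ⟨{i | ∃ hi : i ∈ s, (G.induce s).Reachable u ⟨i, hi⟩}, u, u.2, w, w.2, ⟨u.2, .rfl⟩,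
    fun ⟨_, hw⟩ => huw hw, fun i hi j hj hij => ?_⟩
  have hr : (G.induce s).Reachable ⟨i, hi⟩ ⟨j, hj⟩ := SimpleGraph.Adj.reachable hij
  exact ⟨fun ⟨_, h⟩ => ⟨hj, h.trans hr⟩, fun ⟨_, h⟩ => ⟨hi, h.trans hr.symm⟩⟩

lemma _root_.Matrix.trace_fin_eq_zero_of_eq_zero {R : Type*} [AddCommMonoid R] {n : ℕ} (h : n = 0)
    (M : Matrix (Fin n) (Fin n) R) : M.trace = 0 := by
  subst h
  exact trace_fin_zero M

def partialTracePoly (S : Finset Q0) : GlRing v := ∑ i ∈ S, ∑ k : Fin (v i), X ⟨i, (k, k)⟩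

lemma tracePoly_eq_partialTracePoly_univ : tracePoly v = partialTracePoly v Finset.univ := rfl

lemma eval_partialTracePoly (S : Finset Q0) (g : Q0 → ℂ) :
    eval (fun p : GlIdx v => g p.1) (partialTracePoly v S) = ∑ i ∈ S, (v i : ℂ) * g i := by
  simp [partialTracePoly]

lemma isHomogeneous_partialTracePoly (S : Finset Q0) : (partialTracePoly v S).IsHomogeneous 1 :=
  .sum _ _ _ fun _ _ => .sum _ _ _ fun _ _ => isHomogeneous_X _ _

lemma partialTracePoly_notMem_span_tracePoly {S : Finset Q0} {u w : Q0} (hu : 0 < v u)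
    (hw : 0 < v w) (huS : u ∈ S) (hwS : w ∉ S) :
    partialTracePoly v S ∉ Ideal.span {tracePoly v} := by
  intro hmem
  obtain ⟨c, hc⟩ := Ideal.mem_span_singleton'.1 hmem
  -- at the scalar point `ξ_u = v_w`, `ξ_w = -v_u`, `ξ_i = 0` else, `tr ξ = 0` but `t_S ξ ≠ 0`
  let g : Q0 → ℂ := Pi.single u (v w : ℂ) - Pi.single w (v u : ℂ)
  have := congrArg (eval fun p : GlIdx v => g p.1) hc
  rw [eval_mul, tracePoly_eq_partialTracePoly_univ, eval_partialTracePoly,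
    eval_partialTracePoly] at this
  simp only [Pi.sub_apply, Pi.single_apply, mul_sub, mul_ite, mul_zero, Finset.sum_sub_distrib,
    Finset.sum_ite_eq', Finset.mem_univ, ↓reduceIte, huS, hwS, sub_zero, g] at this
  have h0 : (v u : ℂ) * v w = 0 := by linear_combination -this
  exact mul_ne_zero (Nat.cast_ne_zero.2 hu.ne') (Nat.cast_ne_zero.2 hw.ne') h0

lemma prime_tracePoly {u : Q0} (hu : 0 < v u) : Prime (tracePoly v) := by
  rw [tracePoly_eq_partialTracePoly_univ]
  have hne : partialTracePoly v Finset.univ ≠ 0 := fun h => by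
    have := congrArg (eval fun p : GlIdx v => (Pi.single u (1 : ℂ) : Q0 → ℂ) p.1) h
    rw [eval_partialTracePoly] at this
    simp only [Pi.single_apply, mul_ite, mul_one, mul_zero, Finset.sum_ite_eq', Finset.mem_univ,
      ↓reduceIte, map_zero, Nat.cast_eq_zero] at this
    exact hu.ne' this
  refine (irreducible_of_totalDegree_eq_one
    ((isHomogeneous_partialTracePoly v _).totalDegree hne) fun x hx => ?_).prime
  refine isUnit_iff_ne_zero.2 fun hx0 => hne (MvPolynomial.ext _ _ fun m => ?_)
  simpa [hx0] using hx m

lemma isDomain_gRing {u : Q0} (hu : 0 < v u) : IsDomain (GRing v) :=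
  haveI := (Ideal.span_singleton_prime (prime_tracePoly v hu).ne_zero).2 (prime_tracePoly v hu)
  Ideal.Quotient.isDomain _

lemma comoment_injective_of_momentFlat {u : Q0} (hu : 0 < v u) (hflat : MomentFlat tl hd v) :
    Function.Injective (comoment tl hd v) := by
  let _ : Algebra (GRing v) (RepRing tl hd v) := (comoment tl hd v).toAlgebra
  have : Module.Flat (GRing v) (RepRing tl hd v) := hflat
  have := isDomain_gRing v hu
  exact FaithfulSMul.algebraMap_injective (GRing v) (RepRing tl hd v)

lemma comoment_mk (p : GlRing v) :
    comoment tl hd v (Ideal.Quotient.mk _ p) = comomentAux tl hd v p :=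
  Ideal.Quotient.lift_mk _ _ _

lemma underlyingGraph_adj_of_ne {a : Q1} (h : tl a ≠ hd a) :
    (underlyingGraph tl hd).Adj (tl a) (hd a) :=
  ⟨h, a, .inl ⟨rfl, rfl⟩⟩

lemma trace_muMat (i : Q0) : (muMat tl hd v i).trace =
    (∑ a : Q1, if hd a = i then (Xm tl hd v a * Ym tl hd v a).trace else 0)
      - ∑ a : Q1, if tl a = i then (Ym tl hd v a * Xm tl hd v a).trace else 0 := by
  rw [muMat, trace_sub, trace_sum, trace_sum]
  congr 1 <;> refine Finset.sum_congr rfl fun a _ => ?_ <;> split <;> simp [trace_castSq, *]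

lemma comomentAux_partialTracePoly (S : Finset Q0)
    (hS : ∀ a, 0 < v (tl a) → 0 < v (hd a) → (tl a ∈ S ↔ hd a ∈ S)) :
    comomentAux tl hd v (partialTracePoly v S) = 0 := by
  have h : comomentAux tl hd v (partialTracePoly v S) = ∑ i ∈ S, (muMat tl hd v i).trace := by
    simp only [partialTracePoly, map_sum, comomentAux, aeval_X]
    rfl
  rw [h, Finset.sum_congr rfl fun i _ => trace_muMat tl hd v i, Finset.sum_sub_distrib,
    Finset.sum_comm, Finset.sum_comm (s := S), ← Finset.sum_sub_distrib]
  refine Finset.sum_eq_zero fun a _ => ?_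
  simp only [Finset.sum_ite_eq, trace_mul_comm (Ym tl hd v a)]
  rcases (v (tl a)).eq_zero_or_pos with hvt | hvt
  · simp [trace_mul_comm (Xm tl hd v a), Matrix.trace_fin_eq_zero_of_eq_zero hvt]
  rcases (v (hd a)).eq_zero_or_pos with hvh | hvh
  · simp [Matrix.trace_fin_eq_zero_of_eq_zero hvh]
  simp [hS a hvt hvh]

/-- If the moment map of `(Q,v)` is flat and `v ≠ 0`, then the support of `v` induces a
connected full subgraph of the underlying graph of `Q`. -/
theorem support_connected_of_momentFlat (hv : v ≠ 0) (hflat : MomentFlat tl hd v) :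
    ((underlyingGraph tl hd).induce {i : Q0 | 0 < v i}).Connected := by
  classical
  obtain ⟨u, hu⟩ : ∃ u, 0 < v u := by
    by_contra! h
    exact hv (funext fun i => Nat.le_zero.mp (h i))
  refine (SimpleGraph.connected_iff _).2 ⟨?_, ⟨⟨u, hu⟩⟩⟩
  by_contra hpre
  obtain ⟨S, i, hi, j, hj, hiS, hjS, hS⟩ :=
    SimpleGraph.exists_adj_closed_of_not_preconnected_induce hpre
  have hclosed : ∀ a, 0 < v (tl a) → 0 < v (hd a) → (tl a ∈ S.toFinset ↔ hd a ∈ S.toFinset) := by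
    intro a ht hh
    rw [Set.mem_toFinset, Set.mem_toFinset]
    rcases eq_or_ne (tl a) (hd a) with heq | hne
    · rw [heq]
    · exact hS _ ht _ hh (underlyingGraph_adj_of_ne tl hd hne)
  have hker : Ideal.Quotient.mk _ (partialTracePoly v S.toFinset) = (0 : GRing v) := by
    apply comoment_injective_of_momentFlat tl hd v hu hflat
    rw [comoment_mk, map_zero, comomentAux_partialTracePoly tl hd v _ hclosed]
  exact partialTracePoly_notMem_span_tracePoly v hi hj (Set.mem_toFinset.2 hiS)
    (mt Set.mem_toFinset.1 hjS) (Ideal.Quotient.eq_zero_iff_mem.1 hker)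

end QuiverScheme
end
end

section
/- Let C be a symmetric m×m integer matrix all of whose diagonal entries are even, and set p(u) = 1 − (1/2) u·Cu for u ∈ ℤ^m. Let w ∈ ℤ^m, let r ≥ 2, let k₁, …, k_r be positive integers, and put v = (k₁ + ⋯ + k_r)·w. If p(v) ≥ Σ_{t=1}^r p(k_t w), then in fact p(v) − Σ_{t=1}^r p(k_t w) ≥ (r − 1)²; in particular p(v) > Σ_{t=1}^r p(k_t w). -/
open Matrix

lemma even_quad_aux (m : ℕ) (C : Matrix (Fin m) (Fin m) ℤ) (hsymm : C.IsSymm)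
    (heven : ∀ i, Even (C i i)) (u : Fin m → ℤ) : Even (u ⬝ᵥ C.mulVec u) := by
  suffices hz : ((u ⬝ᵥ C.mulVec u : ℤ) : ZMod 2) = 0 by
    rw [even_iff_two_dvd]
    exact_mod_cast (ZMod.intCast_zmod_eq_zero_iff_dvd _ 2).mp hz
  have hrw : ((u ⬝ᵥ C.mulVec u : ℤ) : ZMod 2)
      = ∑ x ∈ Finset.univ ×ˢ Finset.univ,
          ((u x.1 * (C x.1 x.2 * u x.2) : ℤ) : ZMod 2) := by
    rw [Finset.sum_product]
    simp [dotProduct, Matrix.mulVec, Finset.mul_sum]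
  rw [hrw]
  refine Finset.sum_involution (fun x _ => (x.2, x.1)) ?_ ?_ (fun _ _ => by simp) (fun _ _ => rfl)
  · intro a _
    have hs : C a.2 a.1 = C a.1 a.2 := by
      have := congrFun (congrFun hsymm a.1) a.2
      simpa [Matrix.transpose_apply] using this
    have : ((u a.2 * (C a.2 a.1 * u a.1) : ℤ) : ZMod 2)
        = ((u a.1 * (C a.1 a.2 * u a.2) : ℤ) : ZMod 2) := by
      rw [hs]; ring_nf
    rw [this, ← two_mul]
    push_cast
    simp [show (2 : ZMod 2) = 0 by decide]
  · intro a _ hfa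
    intro h
    apply hfa
    have h2 : a.2 = a.1 := congrArg Prod.fst h
    obtain ⟨c, hc⟩ := heven a.1
    rw [h2, hc]
    have : u a.1 * ((c + c) * u a.1) = 2 * (u a.1 * (c * u a.1)) := by ring
    rw [this]
    push_cast
    simp [show (2 : ZMod 2) = 0 by decide]

/-- For a symmetric integer matrix `C` with even diagonal entries, set
`p(u) = 1 - (1/2) u·Cu`. If `v = (k₁ + ⋯ + k_r)·w` with `r ≥ 2` and all `k_t ≥ 1`, and
`p(v) ≥ ∑_t p(k_t w)`, then `p(v) - ∑_t p(k_t w) ≥ (r-1)²`; in particular the inequality is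
strict. -/
theorem strict_superadditivity_on_proportional_decompositions
    (m : ℕ) (C : Matrix (Fin m) (Fin m) ℤ) (hsymm : C.IsSymm)
    (heven : ∀ i, Even (C i i))
    (p : (Fin m → ℤ) → ℚ)
    (hp : ∀ u : Fin m → ℤ, p u = 1 - (1 / 2 : ℚ) * ((u ⬝ᵥ C.mulVec u : ℤ) : ℚ))
    (w : Fin m → ℤ) (r : ℕ) (hr : 2 ≤ r) (k : Fin r → ℤ) (hk : ∀ t, 1 ≤ k t)
    (v : Fin m → ℤ) (hv : v = fun i => (∑ t, k t) * w i)
    (hineq : p v ≥ ∑ t, p (fun i => k t * w i)) :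
    p v - ∑ t, p (fun i => k t * w i) ≥ ((r : ℚ) - 1) ^ 2 ∧
      p v > ∑ t, p (fun i => k t * w i) := by
  obtain ⟨c, hc⟩ := even_quad_aux m C hsymm heven w
  -- scaling identity
  have hscale : ∀ a : ℤ,
      ((fun i => a * w i) ⬝ᵥ C.mulVec (fun i => a * w i)) = a ^ 2 * (w ⬝ᵥ C.mulVec w) := by
    intro a
    have h1 : (fun i => a * w i) = a • w := rfl
    rw [h1, Matrix.mulVec_smul, smul_dotProduct, dotProduct_smul, smul_eq_mul, smul_eq_mul]
    ring
  set K : ℤ := ∑ t, k t with hK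
  -- p values
  have hpv : p v = 1 - ((K ^ 2 * c : ℤ) : ℚ) := by
    rw [hp, hv, hscale, hc]
    push_cast
    ring
  have hpt : ∀ t, p (fun i => k t * w i) = 1 - (((k t) ^ 2 * c : ℤ) : ℚ) := by
    intro t
    rw [hp, hscale, hc]
    push_cast
    ring
  set S : ℤ := K ^ 2 - ∑ t, (k t) ^ 2 with hS
  -- the difference as an integer
  have hdiff : p v - ∑ t, p (fun i => k t * w i) = ((1 - (r : ℤ) - c * S : ℤ) : ℚ) := by
    rw [hpv]
    rw [Finset.sum_congr rfl (fun t _ => hpt t)]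
    rw [Finset.sum_sub_distrib]
    push_cast [Finset.sum_mul, hS]
    simp only [Finset.sum_const, Finset.card_univ, Fintype.card_fin, nsmul_eq_mul, mul_one,
      ← Finset.sum_mul]
    ring
  -- lower bound on S
  have hSbound : (r : ℤ) * ((r : ℤ) - 1) ≤ S := by
    have hKsq : K ^ 2 = ∑ x ∈ Finset.univ ×ˢ Finset.univ, k x.1 * k x.2 := by
      rw [hK, sq, Finset.sum_mul_sum]
      rw [Finset.sum_product]
    have hdiag : ∑ x ∈ (Finset.univ : Finset (Fin r)).diag, k x.1 * k x.2
        = ∑ t, (k t) ^ 2 := by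
      rw [Finset.sum_diag]
      exact Finset.sum_congr rfl fun t _ => (sq (k t)).symm
    have hsplit : S = ∑ x ∈ (Finset.univ : Finset (Fin r)).offDiag, k x.1 * k x.2 := by
      rw [hS, hKsq, ← Finset.diag_union_offDiag (Finset.univ : Finset (Fin r)),
        Finset.sum_union (Finset.disjoint_diag_offDiag _), hdiag]
      ring
    rw [hsplit]
    have hcard : ((Finset.univ : Finset (Fin r)).offDiag.card : ℤ) = (r : ℤ) * ((r : ℤ) - 1) := by
      rw [Finset.offDiag_card, Finset.card_univ, Fintype.card_fin]
      have h1 : r ≤ r * r := Nat.le_mul_of_pos_left r (by omega)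
      rw [Nat.cast_sub h1]
      push_cast
      ring
    calc (r : ℤ) * ((r : ℤ) - 1)
        = (Finset.univ : Finset (Fin r)).offDiag.card • (1 : ℤ) := by
          rw [nsmul_eq_mul, mul_one, hcard]
      _ ≤ ∑ x ∈ (Finset.univ : Finset (Fin r)).offDiag, k x.1 * k x.2 := by
          apply Finset.card_nsmul_le_sum
          intro x _
          exact one_le_mul_of_one_le_of_one_le (hk x.1) (hk x.2)
  -- hypothesis as integer inequality
  have h0 : (0 : ℤ) ≤ 1 - (r : ℤ) - c * S := by
    have := sub_nonneg.mpr hineq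
    rw [hdiff] at this
    exact_mod_cast this
  have hrZ : (2 : ℤ) ≤ (r : ℤ) := by exact_mod_cast hr
  have hSpos : 0 < S := lt_of_lt_of_le (by nlinarith) hSbound
  have hcneg : c ≤ -1 := by nlinarith
  have hfinal : ((r : ℤ) - 1) ^ 2 ≤ 1 - (r : ℤ) - c * S := by nlinarith
  have hmain : p v - ∑ t, p (fun i => k t * w i) ≥ ((r : ℚ) - 1) ^ 2 := by
    rw [hdiff]
    have : (((r : ℤ) - 1) ^ 2 : ℤ) ≤ (1 - (r : ℤ) - c * S) := hfinal
    calc ((r : ℚ) - 1) ^ 2 = (((( r : ℤ) - 1) ^ 2 : ℤ) : ℚ) := by push_cast; ring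
      _ ≤ _ := by exact_mod_cast this
  refine ⟨hmain, ?_⟩
  have hrQ : (2 : ℚ) ≤ (r : ℚ) := by exact_mod_cast hr
  nlinarith [hmain]
end
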